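/- Let (α_j) be a positive sequence with Σ_j α_j = ∞ and α_j → 0, and let x_{j+1} = x_j + α_j sgn(d_j − x_j) with |d_j − d| < ε/2 for all j ≥ j₀ and α_j < ε/2 for j ≥ j₀. Then there exists j₁ ≥ j₀ such that |x_{j₁} − d| < ε. -/

import Mathlib

open Filter

/-- Sign function: 1 if positive, -1 if negative, 0 at zero. -/
noncomputable def sgn (z : ℝ) : ℝ := if 0 < z then 1 else if z < 0 then -1 else 0

/-!
Suppose the iterate starts below `dlim` and never enters the `ε`-band around it. Whenever it is
below `dlim` it is then at least `ε` below, so the target `d j` (within `ε / 2` of `dlim`) lies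
above it and it moves up by exactly `α j < ε / 2`: it cannot jump over the band, hence stays below
`dlim` forever while increasing by `α j` at every step, contradicting `∑ α j = ∞`. An iterate
starting above `dlim` is the mirror image under `x ↦ -x`.
-/

lemma sgn_of_pos {z : ℝ} (hz : 0 < z) : sgn z = 1 := if_pos hz

lemma sgn_neg (z : ℝ) : sgn (-z) = -sgn z := by
  unfold sgn
  split_ifs <;> linarith

theorem tendsto_atTop_of_forall_add_le_succ {α x : ℕ → ℝ} {j₀ : ℕ}
    (hαdiv : Tendsto (fun n => ∑ j ∈ Finset.range n, α j) atTop atTop)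
    (hstep : ∀ j ≥ j₀, x j + α j ≤ x (j + 1)) : Tendsto x atTop atTop := by
  have hlower : ∀ n ≥ j₀,
      x j₀ - ∑ j ∈ Finset.range j₀, α j + ∑ j ∈ Finset.range n, α j ≤ x n := by
    intro n hn
    induction n, hn using Nat.le_induction with
    | base => simp
    | succ n hn ih => rw [Finset.sum_range_succ]; linarith [hstep n hn]
  exact tendsto_atTop_mono' atTop (eventually_atTop.2 ⟨j₀, hlower⟩)
    (tendsto_atTop_add_const_left _ _ hαdiv)

theorem exists_abs_sub_lt_of_le {α d x : ℕ → ℝ} {dlim ε : ℝ} {j₀ : ℕ}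
    (hαdiv : Tendsto (fun n => ∑ j ∈ Finset.range n, α j) atTop atTop)
    (hd : ∀ j ≥ j₀, |d j - dlim| < ε / 2) (hα : ∀ j ≥ j₀, α j < ε / 2)
    (hx : ∀ j, x (j + 1) = x j + α j * sgn (d j - x j)) (hbelow : x j₀ ≤ dlim) :
    ∃ j₁ ≥ j₀, |x j₁ - dlim| < ε := by
  by_contra! hfar
  have hε : 0 < ε := by linarith [abs_nonneg (d j₀ - dlim), hd j₀ le_rfl]
  have hfar_below : ∀ j ≥ j₀, x j ≤ dlim → x j ≤ dlim - ε := fun j hj hxj => by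
    linarith [(le_abs'.1 (hfar j hj)).resolve_right (by linarith)]
  have hup : ∀ j ≥ j₀, x j ≤ dlim → x (j + 1) = x j + α j := fun j hj hxj => by
    have hdx : 0 < d j - x j := by linarith [(abs_lt.1 (hd j hj)).1, hfar_below j hj hxj]
    rw [hx, sgn_of_pos hdx, mul_one]
  have htrapped : ∀ j ≥ j₀, x j ≤ dlim := by
    intro j hj
    induction j, hj using Nat.le_induction with
    | base => exact hbelow
    | succ j hj ih => linarith [hup j hj ih, hα j hj, hfar_below j hj ih]
  have htendsto : Tendsto x atTop atTop :=
    tendsto_atTop_of_forall_add_le_succ hαdiv fun j hj => (hup j hj (htrapped j hj)).ge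
  obtain ⟨j, hj, hj₀⟩ :=
    ((htendsto.eventually_gt_atTop dlim).and (eventually_ge_atTop j₀)).exists
  linarith [htrapped j hj₀]

theorem stmt_14_general (α : ℕ → ℝ)
    (hαdiv : Tendsto (fun n => ∑ j ∈ Finset.range n, α j) atTop atTop)
    (d : ℕ → ℝ) (dlim : ℝ) (ε : ℝ) (j₀ : ℕ)
    (hd : ∀ j ≥ j₀, |d j - dlim| < ε / 2) (hα : ∀ j ≥ j₀, α j < ε / 2)
    (x : ℕ → ℝ) (hx : ∀ j, x (j + 1) = x j + α j * sgn (d j - x j)) :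
    ∃ j₁ ≥ j₀, |x j₁ - dlim| < ε := by
  rcases le_total (x j₀) dlim with hbelow | habove
  · exact exists_abs_sub_lt_of_le hαdiv hd hα hx hbelow
  · have hd' : ∀ j ≥ j₀, |-d j - -dlim| < ε / 2 := fun j hj => by
      rw [neg_sub_neg, abs_sub_comm]; exact hd j hj
    have hx' : ∀ j, -x (j + 1) = -x j + α j * sgn (-d j - -x j) := fun j => by
      rw [hx, ← neg_sub', sgn_neg]; ring
    obtain ⟨j₁, hj₁, hnear⟩ := exists_abs_sub_lt_of_le (x := fun j => -x j) hαdiv hd' hα hx'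
      (neg_le_neg habove)
    exact ⟨j₁, hj₁, by rwa [neg_sub_neg, abs_sub_comm] at hnear⟩

theorem stmt_14 (α : ℕ → ℝ) (hαpos : ∀ j, 0 < α j) (hα0 : Tendsto α atTop (nhds 0))
    (hαdiv : Tendsto (fun n => ∑ j ∈ Finset.range n, α j) atTop atTop)
    (d : ℕ → ℝ) (dlim : ℝ) (ε : ℝ) (hε : 0 < ε) (j₀ : ℕ)
    (hd : ∀ j ≥ j₀, |d j - dlim| < ε / 2) (hα : ∀ j ≥ j₀, α j < ε / 2)
    (x : ℕ → ℝ) (hx : ∀ j, x (j + 1) = x j + α j * sgn (d j - x j)) :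
    ∃ j₁ ≥ j₀, |x j₁ - dlim| < ε :=
  stmt_14_general α hαdiv d dlim ε j₀ hd hα x hx
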